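/- Let V be a simple Z2-graded comodule over a Z2-graded coalgebra C over an algebraically closed field. Then the commutant of V (the graded endomorphism algebra of V as a comodule) is either one- or two-dimensional: its even part consists of the scalar multiples of the identity, and its odd part is either zero or spanned by an odd comodule endomorphism J with J² = −id; moreover the odd part is nonzero if and only if V is reducible as a comodule in the nongraded sense. -/

import Mathlib

open TensorProduct

namespace SuperCoalg

variable (k : Type) [Field k]
variable (C : Type) [AddCommGroup C] [Module k C] [Coalgebra k C]

/-- `β : V →ₗ[k] V ⊗[k] C` is a (right) comodule structure map over the coalgebra `C`. -/
structure IsComodule {V : Type} [AddCommGroup V] [Module k V]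
    (β : V →ₗ[k] V ⊗[k] C) : Prop where
  coassoc : (TensorProduct.assoc k V C C).toLinearMap ∘ₗ β.rTensor C ∘ₗ β
      = LinearMap.lTensor V (Coalgebra.comul (R := k) (A := C)) ∘ₗ β
  counit_id : (TensorProduct.rid k V).toLinearMap ∘ₗ
      LinearMap.lTensor V (Coalgebra.counit (R := k) (A := C)) ∘ₗ β = LinearMap.id

/-- A bundled right `C`-comodule. -/
structure Comod where
  V : Type
  [addCommGroup : AddCommGroup V]
  [module : Module k V]
  β : V →ₗ[k] V ⊗[k] C
  isComodule : IsComodule k C β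

attribute [instance] Comod.addCommGroup Comod.module

variable {k C}

/-- A submodule `W ≤ V` is a subcomodule for the structure map `β`. -/
def IsSubcomodule {V : Type} [AddCommGroup V] [Module k V]
    (β : V →ₗ[k] V ⊗[k] C) (W : Submodule k V) : Prop :=
  ∀ w ∈ W, β w ∈ LinearMap.range (W.subtype.rTensor C)

/-- `f` is a homomorphism of right `C`-comodules from `(V, β)` to `(W, γ)`. -/
def IsComodHom {V W : Type} [AddCommGroup V] [Module k V] [AddCommGroup W] [Module k W]
    (β : V →ₗ[k] V ⊗[k] C) (γ : W →ₗ[k] W ⊗[k] C) (f : V →ₗ[k] W) : Prop :=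
  f.rTensor C ∘ₗ β = γ ∘ₗ f

/-- A subcomodule is simple if it is nonzero and has no nonzero proper subcomodules. -/
def IsSimpleSubcomodule {V : Type} [AddCommGroup V] [Module k V]
    (β : V →ₗ[k] V ⊗[k] C) (W : Submodule k V) : Prop :=
  IsSubcomodule β W ∧ W ≠ ⊥ ∧
    ∀ U : Submodule k V, U ≤ W → IsSubcomodule β U → U = ⊥ ∨ U = W

/-- The socle of the comodule `(V, β)`: the sum of all its simple subcomodules. -/
def socle {V : Type} [AddCommGroup V] [Module k V]
    (β : V →ₗ[k] V ⊗[k] C) : Submodule k V :=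
  sSup {W : Submodule k V | IsSimpleSubcomodule β W}

/-- A comodule is simple if it is nonzero and has no nonzero proper subcomodules. -/
def IsSimpleComod (M : Comod k C) : Prop :=
  Nontrivial M.V ∧ ∀ W : Submodule k M.V, IsSubcomodule M.β W → W = ⊥ ∨ W = ⊤

/-- A comodule is indecomposable if it is nonzero and is not the direct sum of two
nonzero subcomodules. -/
def IsIndecomposableComod (M : Comod k C) : Prop :=
  Nontrivial M.V ∧ ∀ W W' : Submodule k M.V,
    IsSubcomodule M.β W → IsSubcomodule M.β W' → IsCompl W W' → W = ⊥ ∨ W' = ⊥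

/-- A comodule is injective if it splits off every comodule containing it as a
subcomodule. -/
def IsInjectiveComod (M : Comod k C) : Prop :=
  ∀ (W : Comod k C) (g : M.V →ₗ[k] W.V),
    IsComodHom M.β W.β g → Function.Injective g →
      ∃ X' : Submodule k W.V, IsSubcomodule W.β X' ∧ IsCompl (LinearMap.range g) X'

/-- `N` is an injective cover of the simple comodule `S`: `N` is indecomposable,
injective, and its socle is a copy of `S`. -/
def IsInjectiveCover (N S : Comod k C) : Prop :=
  IsIndecomposableComod N ∧ IsInjectiveComod N ∧
    ∃ g : S.V →ₗ[k] N.V, IsComodHom S.β N.β g ∧ Function.Injective g ∧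
      LinearMap.range g = socle N.β

/-- The coefficient map `φ_V : V* ⊗ V → C` of a comodule `(V, β)`, given by right linear
extension of forms, `φ_V (ω ⊗ v) = (ω ⊗ id) (β v)`. -/
noncomputable def coeffMap {V : Type} [AddCommGroup V] [Module k V]
    (β : V →ₗ[k] V ⊗[k] C) : (Module.Dual k V) ⊗[k] V →ₗ[k] C :=
  (TensorProduct.lid k C).toLinearMap ∘ₗ
    (contractLeft k V).rTensor C ∘ₗ
    (TensorProduct.assoc k (Module.Dual k V) V C).symm.toLinearMap ∘ₗ
    LinearMap.lTensor (Module.Dual k V) β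

/-- `(C₀, C₁)` is a `Z₂`-grading of the coalgebra `C`: the comultiplication and the
counit are homogeneous of degree zero. -/
structure IsGradedCoalgebra (C₀ C₁ : Submodule k C) : Prop where
  compl : IsCompl C₀ C₁
  comul_even : ∀ x ∈ C₀, Coalgebra.comul (R := k) x ∈
    LinearMap.range (TensorProduct.mapIncl C₀ C₀) ⊔
      LinearMap.range (TensorProduct.mapIncl C₁ C₁)
  comul_odd : ∀ x ∈ C₁, Coalgebra.comul (R := k) x ∈
    LinearMap.range (TensorProduct.mapIncl C₀ C₁) ⊔
      LinearMap.range (TensorProduct.mapIncl C₁ C₀)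
  counit_odd : ∀ x ∈ C₁, Coalgebra.counit (R := k) x = 0

/-- `(V₀, V₁)` is a `Z₂`-grading of the comodule `(V, β)` (over the graded coalgebra
`C = C₀ ⊕ C₁`) for which the structure map is homogeneous of degree zero. -/
structure IsGradedComodule (C₀ C₁ : Submodule k C) {V : Type} [AddCommGroup V]
    [Module k V] (β : V →ₗ[k] V ⊗[k] C) (V₀ V₁ : Submodule k V) : Prop where
  compl : IsCompl V₀ V₁
  even : ∀ v ∈ V₀, β v ∈
    LinearMap.range (TensorProduct.mapIncl V₀ C₀) ⊔
      LinearMap.range (TensorProduct.mapIncl V₁ C₁)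
  odd : ∀ v ∈ V₁, β v ∈
    LinearMap.range (TensorProduct.mapIncl V₀ C₁) ⊔
      LinearMap.range (TensorProduct.mapIncl V₁ C₀)

/-- A submodule is graded (w.r.t. the grading `(V₀, V₁)`) if it is the sum of its
homogeneous parts. -/
def IsGradedSubmodule {V : Type} [AddCommGroup V] [Module k V]
    (V₀ V₁ W : Submodule k V) : Prop :=
  W = (W ⊓ V₀) ⊔ (W ⊓ V₁)

/-- A graded subcomodule is (graded) simple if it is nonzero and has no nonzero proper
graded subcomodules. -/
def IsGradedSimpleSub {V : Type} [AddCommGroup V] [Module k V]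
    (β : V →ₗ[k] V ⊗[k] C) (V₀ V₁ : Submodule k V) (W : Submodule k V) : Prop :=
  IsSubcomodule β W ∧ IsGradedSubmodule V₀ V₁ W ∧ W ≠ ⊥ ∧
    ∀ U : Submodule k V, U ≤ W → IsSubcomodule β U → IsGradedSubmodule V₀ V₁ U →
      U = ⊥ ∨ U = W

/-!
Slicing the structure map with functionals `φ ∈ C*` makes `V` a module over the convolution
algebra `C*`, via `φ ⇀ v = (id ⊗ φ) (β v)`: subcomodules are the subspaces stable under all
`φ ⇀ ·`, comodule maps are the maps commuting with them, and the comodule generated by a vector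
is finite dimensional. Splitting `φ` along `C = C₀ ⊕ C₁` splits `φ ⇀ ·` into an even and an odd
operator, so the graded part `(W ∩ V₀) ⊕ (W ∩ V₁)` and the graded closure `p₀ W ⊕ p₁ W` of a
subcomodule `W` (with `p₀, p₁` the projections of `V = V₀ ⊕ V₁`) are again subcomodules. In
particular `V` is the graded closure of a finite-dimensional subcomodule.

Schur's argument then applies to homogeneous endomorphisms: their kernels are graded
subcomodules, so an even `f` equals `c • id` for an eigenvalue `c`, a nonzero odd `f` is
injective and `f ∘ f` is a nonzero scalar, so a rescaling `J` of `f` has `J ∘ J = -id`, and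
every odd `g` is `-(J ∘ (J ∘ g))` with `J ∘ g` even. An eigenspace of a nonzero odd `f` is a
proper subcomodule. Conversely, a proper nonzero subcomodule `W` has trivial graded part and
graded closure `V`, so it is a common complement of `V₀` and `V₁`; the odd map that is the
identity on `W` commutes with every homogeneous operator preserving `W`, hence is a comodule
endomorphism.
-/

section Slice

variable {V N : Type*} [AddCommGroup V] [Module k V] [AddCommGroup N] [Module k N]

noncomputable def rightSlice (φ : Module.Dual k N) : V ⊗[k] N →ₗ[k] V :=
  (TensorProduct.rid k V).toLinearMap ∘ₗ φ.lTensor V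

@[simp]
lemma rightSlice_tmul (φ : Module.Dual k N) (v : V) (n : N) :
    rightSlice φ (v ⊗ₜ[k] n) = φ n • v := by
  simp [rightSlice]

@[simp]
lemma rightSlice_zero : rightSlice (V := V) (0 : Module.Dual k N) = 0 := by
  ext; simp

lemma rightSlice_add (φ ψ : Module.Dual k N) :
    rightSlice (V := V) (φ + ψ) = rightSlice φ + rightSlice ψ := by
  ext; simp [add_smul]

lemma rightSlice_rTensor {W : Type*} [AddCommGroup W] [Module k W] (f : V →ₗ[k] W)
    (φ : Module.Dual k N) (t : V ⊗[k] N) : rightSlice φ (f.rTensor N t) = f (rightSlice φ t) := by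
  induction t using TensorProduct.induction_on <;> simp_all

lemma rightSlice_lTensor {P : Type*} [AddCommGroup P] [Module k P] (g : N →ₗ[k] P)
    (φ : Module.Dual k P) (t : V ⊗[k] N) :
    rightSlice φ (g.lTensor V t) = rightSlice (φ ∘ₗ g) t := by
  induction t using TensorProduct.induction_on <;> simp_all

lemma rightSlice_map {W P : Type*} [AddCommGroup W] [Module k W] [AddCommGroup P] [Module k P]
    (f : W →ₗ[k] V) (g : P →ₗ[k] N) (φ : Module.Dual k N) (t : W ⊗[k] P) :
    rightSlice φ (TensorProduct.map f g t) = f (rightSlice (φ ∘ₗ g) t) := by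
  induction t using TensorProduct.induction_on <;> simp_all

lemma rightSlice_rightSlice {P : Type*} [AddCommGroup P] [Module k P] (φ : Module.Dual k N)
    (ψ : Module.Dual k P) (t : (V ⊗[k] N) ⊗[k] P) :
    rightSlice φ (rightSlice ψ t) =
      rightSlice (LinearMap.mul' k k ∘ₗ TensorProduct.map φ ψ) (TensorProduct.assoc k V N P t) := by
  induction t using TensorProduct.induction_on with
  | zero => simp
  | add x y hx hy => simp_all
  | tmul x p =>
    induction x using TensorProduct.induction_on with
    | zero => simp
    | add x y hx hy => simp_all [add_tmul]
    | tmul v n => simp [smul_smul, mul_comm]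

lemma ext_rightSlice {t t' : V ⊗[k] N}
    (h : ∀ φ : Module.Dual k N, rightSlice φ t = rightSlice φ t') : t = t' := by
  classical
  let b := Module.Basis.ofVectorSpace k N
  have hcoord : ∀ s : V ⊗[k] N, ∀ j,
      TensorProduct.equivFinsuppOfBasisRight b s j = rightSlice (b.coord j) s := by
    intro s j
    induction s using TensorProduct.induction_on with
    | zero => simp
    | add x y hx hy => simp_all
    | tmul v n => simp
  apply (TensorProduct.equivFinsuppOfBasisRight b).injective
  ext j
  rw [hcoord, hcoord, h]

lemma mem_range_rTensor_subtype_iff {W : Submodule k V} {t : V ⊗[k] N} :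
    t ∈ LinearMap.range (W.subtype.rTensor N) ↔ ∀ φ : Module.Dual k N, rightSlice φ t ∈ W := by
  constructor
  · rintro ⟨u, rfl⟩ φ
    rw [rightSlice_rTensor]
    exact (rightSlice φ u).2
  · intro h
    rw [← (rTensor_exact N (LinearMap.exact_subtype_mkQ W) W.mkQ_surjective).linearMap_ker_eq,
      LinearMap.mem_ker]
    refine ext_rightSlice fun φ => ?_
    rw [rightSlice_rTensor, map_zero, Submodule.mkQ_apply, Submodule.Quotient.mk_eq_zero]
    exact h φ

lemma exists_finiteDimensional_rightSlice_mem (t : V ⊗[k] N) :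
    ∃ U : Submodule k V, FiniteDimensional k U ∧ ∀ φ : Module.Dual k N, rightSlice φ t ∈ U := by
  induction t using TensorProduct.induction_on with
  | zero => exact ⟨⊥, inferInstance, fun φ => by simp⟩
  | tmul v n => exact ⟨k ∙ v, inferInstance, fun φ => by
      simpa using Submodule.smul_mem _ (φ n) (Submodule.mem_span_singleton_self v)⟩
  | add x y hx hy =>
    obtain ⟨U, hU, hxU⟩ := hx
    obtain ⟨U', hU', hyU'⟩ := hy
    exact ⟨U ⊔ U', inferInstance, fun φ => by
      rw [map_add]; exact Submodule.add_mem_sup (hxU φ) (hyU' φ)⟩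

noncomputable def dualAction (β : V →ₗ[k] V ⊗[k] N) (φ : Module.Dual k N) : Module.End k V :=
  rightSlice φ ∘ₗ β

lemma dualAction_add (β : V →ₗ[k] V ⊗[k] N) (φ ψ : Module.Dual k N) :
    dualAction β (φ + ψ) = dualAction β φ + dualAction β ψ := by
  rw [dualAction, rightSlice_add, LinearMap.add_comp]; rfl

end Slice

section DualAction

variable {N V W X : Type} [AddCommGroup N] [Module k N] [AddCommGroup V] [Module k V]
  [AddCommGroup W] [Module k W] [AddCommGroup X] [Module k X]

lemma isSubcomodule_iff_dualAction {β : V →ₗ[k] V ⊗[k] N} {U : Submodule k V} :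
    IsSubcomodule β U ↔ ∀ φ, ∀ u ∈ U, dualAction β φ u ∈ U := by
  simp only [IsSubcomodule, mem_range_rTensor_subtype_iff]
  exact ⟨fun h φ u hu => h u hu φ, fun h u hu φ => h φ u hu⟩

lemma isComodHom_iff_dualAction {β : V →ₗ[k] V ⊗[k] N} {γ : W →ₗ[k] W ⊗[k] N}
    {f : V →ₗ[k] W} :
    IsComodHom β γ f ↔ ∀ φ, f ∘ₗ dualAction β φ = dualAction γ φ ∘ₗ f := by
  constructor
  · intro hf φ
    ext v
    simp only [dualAction, LinearMap.comp_apply, ← rightSlice_rTensor]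
    rw [← LinearMap.comp_apply (f.rTensor N), hf, LinearMap.comp_apply]
  · intro h
    ext v : 1
    refine ext_rightSlice fun φ => ?_
    simpa only [dualAction, LinearMap.comp_apply, rightSlice_rTensor] using
      LinearMap.congr_fun (h φ) v

lemma isComodHom_id (β : V →ₗ[k] V ⊗[k] N) : IsComodHom β β LinearMap.id := by
  rw [IsComodHom, LinearMap.rTensor_id, LinearMap.id_comp, LinearMap.comp_id]

lemma IsComodHom.comp {β : V →ₗ[k] V ⊗[k] N} {γ : W →ₗ[k] W ⊗[k] N} {δ : X →ₗ[k] X ⊗[k] N}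
    {f : V →ₗ[k] W} {g : W →ₗ[k] X} (hg : IsComodHom γ δ g) (hf : IsComodHom β γ f) :
    IsComodHom β δ (g ∘ₗ f) := by
  rw [IsComodHom, LinearMap.rTensor_comp, LinearMap.comp_assoc, hf, ← LinearMap.comp_assoc, hg,
    LinearMap.comp_assoc]

lemma IsComodHom.sub {β : V →ₗ[k] V ⊗[k] N} {γ : W →ₗ[k] W ⊗[k] N} {f g : V →ₗ[k] W}
    (hf : IsComodHom β γ f) (hg : IsComodHom β γ g) : IsComodHom β γ (f - g) := by
  rw [IsComodHom, LinearMap.rTensor_sub, LinearMap.sub_comp, LinearMap.comp_sub, hf, hg]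

lemma IsComodHom.smul {β : V →ₗ[k] V ⊗[k] N} {γ : W →ₗ[k] W ⊗[k] N} {f : V →ₗ[k] W}
    (hf : IsComodHom β γ f) (c : k) : IsComodHom β γ (c • f) := by
  rw [IsComodHom, LinearMap.rTensor_smul, LinearMap.smul_comp, LinearMap.comp_smul, hf]

lemma isSubcomodule_ker {β : V →ₗ[k] V ⊗[k] N} {γ : W →ₗ[k] W ⊗[k] N} {f : V →ₗ[k] W}
    (hf : IsComodHom β γ f) : IsSubcomodule β (LinearMap.ker f) := by
  refine isSubcomodule_iff_dualAction.2 fun φ u hu => ?_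
  rw [LinearMap.mem_ker, ← LinearMap.comp_apply, isComodHom_iff_dualAction.1 hf φ,
    LinearMap.comp_apply, LinearMap.mem_ker.1 hu, map_zero]

lemma IsComodule.dualAction_counit {β : V →ₗ[k] V ⊗[k] C} (hβ : IsComodule k C β) :
    dualAction β (Coalgebra.counit (R := k) (A := C)) = LinearMap.id :=
  hβ.counit_id

lemma IsComodule.dualAction_comp {β : V →ₗ[k] V ⊗[k] C} (hβ : IsComodule k C β)
    (φ ψ : Module.Dual k C) :
    dualAction β φ ∘ₗ dualAction β ψ =
      dualAction β (WithConv.toConv φ * WithConv.toConv ψ).ofConv := by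
  ext v
  have hco := LinearMap.congr_fun hβ.coassoc v
  simp only [LinearMap.comp_apply, LinearEquiv.coe_coe] at hco
  simp only [dualAction, LinearMap.comp_apply]
  rw [← rightSlice_rTensor, rightSlice_rightSlice, hco, rightSlice_lTensor]
  rfl

lemma IsComodule.exists_finiteDimensional_subcomodule {β : V →ₗ[k] V ⊗[k] C}
    (hβ : IsComodule k C β) (v : V) :
    ∃ U : Submodule k V, FiniteDimensional k U ∧ IsSubcomodule β U ∧ v ∈ U := by
  obtain ⟨U', hU', hv⟩ := exists_finiteDimensional_rightSlice_mem (β v)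
  let U := Submodule.span k (Set.range fun φ => dualAction β φ v)
  have hUU' : U ≤ U' := Submodule.span_le.2 (Set.range_subset_iff.2 hv)
  refine ⟨U, Submodule.finiteDimensional_of_le hUU', ?_, ?_⟩
  · refine isSubcomodule_iff_dualAction.2 fun φ => ?_
    suffices U ≤ U.comap (dualAction β φ) from fun u hu => this hu
    refine Submodule.span_le.2 (Set.range_subset_iff.2 fun ψ => Submodule.subset_span ?_)
    exact ⟨_, (LinearMap.congr_fun (hβ.dualAction_comp φ ψ) v).symm⟩
  · rw [← LinearMap.id_apply (R := k) v, ← hβ.dualAction_counit]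
    exact Submodule.subset_span ⟨_, rfl⟩

end DualAction

section Parity

variable {R M : Type*} [CommRing R] [AddCommGroup M] [Module R M]
  {V₀ V₁ W A B X Y : Submodule R M} {f g : M →ₗ[R] M}

def MapsParts (V₀ V₁ A B : Submodule R M) (f : M →ₗ[R] M) : Prop :=
  V₀.map f ≤ A ∧ V₁.map f ≤ B

lemma mapsParts_iff :
    MapsParts V₀ V₁ A B f ↔ (∀ x ∈ V₀, f x ∈ A) ∧ ∀ x ∈ V₁, f x ∈ B := by
  simp only [MapsParts, Submodule.map_le_iff_le_comap]
  rfl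

lemma MapsParts.symm (hf : MapsParts V₀ V₁ A B f) : MapsParts V₁ V₀ B A f :=
  And.symm hf

lemma mapsParts_id : MapsParts V₀ V₁ V₀ V₁ LinearMap.id := by
  simp [MapsParts]

lemma MapsParts.comp (hg : MapsParts A B X Y g) (hf : MapsParts V₀ V₁ A B f) :
    MapsParts V₀ V₁ X Y (g ∘ₗ f) := by
  simp only [MapsParts, Submodule.map_comp]
  exact ⟨(Submodule.map_mono hf.1).trans hg.1, (Submodule.map_mono hf.2).trans hg.2⟩

lemma MapsParts.sub (hf : MapsParts V₀ V₁ A B f) (hg : MapsParts V₀ V₁ A B g) :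
    MapsParts V₀ V₁ A B (f - g) := by
  rw [mapsParts_iff] at *
  exact ⟨fun x hx => A.sub_mem (hf.1 x hx) (hg.1 x hx),
    fun x hx => B.sub_mem (hf.2 x hx) (hg.2 x hx)⟩

lemma MapsParts.smul (hf : MapsParts V₀ V₁ A B f) (c : R) : MapsParts V₀ V₁ A B (c • f) := by
  rw [mapsParts_iff] at *
  exact ⟨fun x hx => A.smul_mem c (hf.1 x hx), fun x hx => B.smul_mem c (hf.2 x hx)⟩

lemma eq_zero_of_even_of_odd (hv : IsCompl V₀ V₁) (heven : MapsParts V₀ V₁ V₀ V₁ f)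
    (hodd : MapsParts V₀ V₁ V₁ V₀ f) : f = 0 := by
  rw [mapsParts_iff] at heven hodd
  refine LinearMap.ext_on_codisjoint hv.codisjoint (fun x hx => ?_) (fun x hx => ?_)
  · exact Submodule.disjoint_def.1 hv.disjoint _ (heven.1 x hx) (hodd.1 x hx)
  · exact Submodule.disjoint_def.1 hv.disjoint _ (hodd.2 x hx) (heven.2 x hx)

lemma MapsParts.projection_apply (hv : IsCompl V₀ V₁) (hAB : IsCompl A B)
    (hf : MapsParts V₀ V₁ A B f) (x : M) :
    A.projection B hAB (f x) = f (V₀.projection V₁ hv x) := by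
  rw [mapsParts_iff] at hf
  conv_lhs => rw [← Submodule.projection_add_projection_eq_self hv x, map_add]
  rw [map_add,
    Submodule.projection_apply_of_mem_left hAB (hf.1 _ (Submodule.projection_apply_mem _ _)),
    Submodule.projection_apply_of_mem_right hAB (hf.2 _ (Submodule.projection_apply_mem _ _)),
    add_zero]

lemma exists_odd_eq_self_of_isCompl (hv : IsCompl V₀ V₁) (h₀ : IsCompl W V₀)
    (h₁ : IsCompl W V₁) : ∃ J : M →ₗ[R] M, MapsParts V₀ V₁ V₁ V₀ J ∧ ∀ w ∈ W, J w = w := by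
  refine ⟨-(V₁.projection W h₁.symm ∘ₗ V₀.projection V₁ hv +
    V₀.projection W h₀.symm ∘ₗ V₁.projection V₀ hv.symm), ?_, fun w hw => ?_⟩
  · rw [mapsParts_iff]
    constructor <;> intro x hx <;>
      simp [Submodule.projection_apply_of_mem_left, Submodule.projection_apply_of_mem_right, hx]
  · have hP₀ : V₀.projection V₁ hv w = w - V₁.projection V₀ hv.symm w :=
      eq_sub_of_add_eq (Submodule.projection_add_projection_eq_self hv w)
    have hP₁ : V₁.projection V₀ hv.symm w = w - V₀.projection V₁ hv w :=
      eq_sub_of_add_eq' (Submodule.projection_add_projection_eq_self hv w)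
    have e₀ : V₁.projection W h₁.symm (V₀.projection V₁ hv w) = -V₁.projection V₀ hv.symm w := by
      rw [hP₀, map_sub, Submodule.projection_apply_of_mem_right _ hw,
        Submodule.projection_apply_of_mem_left _ (Submodule.projection_apply_mem _ _), zero_sub]
    have e₁ : V₀.projection W h₀.symm (V₁.projection V₀ hv.symm w) = -V₀.projection V₁ hv w := by
      rw [hP₁, map_sub, Submodule.projection_apply_of_mem_right _ hw,
        Submodule.projection_apply_of_mem_left _ (Submodule.projection_apply_mem _ _), zero_sub]
    simp only [LinearMap.neg_apply, LinearMap.add_apply, LinearMap.comp_apply, e₀, e₁, neg_add,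
      neg_neg]
    exact add_comm _ _ |>.trans (Submodule.projection_add_projection_eq_self hv w)

noncomputable def gradedClosure (hv : IsCompl V₀ V₁) (W : Submodule R M) : Submodule R M :=
  W.map (V₀.projection V₁ hv) ⊔ W.map (V₁.projection V₀ hv.symm)

lemma le_gradedClosure (hv : IsCompl V₀ V₁) : W ≤ gradedClosure hv W := fun w hw => by
  rw [← Submodule.projection_add_projection_eq_self hv w]
  exact Submodule.add_mem_sup ⟨w, hw, rfl⟩ ⟨w, hw, rfl⟩

lemma gradedClosure_le_sup_left (hv : IsCompl V₀ V₁) : gradedClosure hv W ≤ W ⊔ V₀ := by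
  refine sup_le ?_ ?_ <;> rintro _ ⟨w, hw, rfl⟩
  · exact Submodule.mem_sup_right (Submodule.projection_apply_mem _ _)
  · rw [Submodule.projection_eq_self_sub_projection hv]
    exact Submodule.sub_mem_sup hw (Submodule.projection_apply_mem _ _)

lemma gradedClosure_le_sup_right (hv : IsCompl V₀ V₁) : gradedClosure hv W ≤ W ⊔ V₁ := by
  refine sup_le ?_ ?_ <;> rintro _ ⟨w, hw, rfl⟩
  · rw [Submodule.projection_eq_self_sub_projection hv.symm]
    exact Submodule.sub_mem_sup hw (Submodule.projection_apply_mem _ _)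
  · exact Submodule.mem_sup_right (Submodule.projection_apply_mem _ _)

end Parity

section GradedSubmodule

variable {V : Type} [AddCommGroup V] [Module k V] {V₀ V₁ U W A B : Submodule k V}
  {f : V →ₗ[k] V}

lemma isGradedSubmodule_iff (hv : IsCompl V₀ V₁) :
    IsGradedSubmodule V₀ V₁ U ↔ ∀ u ∈ U, V₀.projection V₁ hv u ∈ U := by
  constructor
  · intro hU u hu
    rw [hU] at hu
    obtain ⟨a, ha, b, hb, rfl⟩ := Submodule.mem_sup.1 hu
    rw [map_add, Submodule.projection_apply_of_mem_left hv ha.2,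
      Submodule.projection_apply_of_mem_right hv hb.2, add_zero]
    exact ha.1
  · intro h
    refine le_antisymm (fun u hu => ?_) (sup_le inf_le_left inf_le_left)
    rw [← Submodule.projection_add_projection_eq_self hv u]
    refine Submodule.add_mem_sup ⟨h u hu, Submodule.projection_apply_mem _ _⟩
      ⟨?_, Submodule.projection_apply_mem _ _⟩
    rw [Submodule.projection_eq_self_sub_projection hv]
    exact U.sub_mem hu (h u hu)

lemma isGradedSubmodule_sup (hA : A ≤ V₀) (hB : B ≤ V₁) : IsGradedSubmodule V₀ V₁ (A ⊔ B) :=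
  le_antisymm (sup_le_sup (le_inf le_sup_left hA) (le_inf le_sup_right hB))
    (sup_le inf_le_left inf_le_left)

lemma isGradedSubmodule_ker (hv : IsCompl V₀ V₁) (hAB : Disjoint A B)
    (hf : MapsParts V₀ V₁ A B f) : IsGradedSubmodule V₀ V₁ (LinearMap.ker f) := by
  rw [isGradedSubmodule_iff hv]
  intro u hu
  rw [mapsParts_iff] at hf
  have hsum : f (V₀.projection V₁ hv u) = -f (V₁.projection V₀ hv.symm u) := by
    rw [eq_neg_iff_add_eq_zero, ← map_add, Submodule.projection_add_projection_eq_self,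
      LinearMap.mem_ker.1 hu]
  exact Submodule.disjoint_def.1 hAB _ (hf.1 _ (Submodule.projection_apply_mem _ _))
    (hsum ▸ B.neg_mem (hf.2 _ (Submodule.projection_apply_mem _ _)))

lemma isGradedSubmodule_gradedClosure (hv : IsCompl V₀ V₁) :
    IsGradedSubmodule V₀ V₁ (gradedClosure hv W) :=
  isGradedSubmodule_sup (LinearMap.map_le_range.trans (Submodule.range_projection hv).le)
    (LinearMap.map_le_range.trans (Submodule.range_projection hv.symm).le)

lemma gradedClosure_le (hv : IsCompl V₀ V₁) (hU : IsGradedSubmodule V₀ V₁ U) (hWU : W ≤ U) :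
    gradedClosure hv W ≤ U := by
  rw [isGradedSubmodule_iff hv] at hU
  refine sup_le ?_ ?_ <;> rintro _ ⟨w, hw, rfl⟩
  · exact hU w (hWU hw)
  · rw [Submodule.projection_eq_self_sub_projection hv]
    exact U.sub_mem (hWU hw) (hU w (hWU hw))

lemma eq_zero_of_mapsParts_of_le_ker (hv : IsCompl V₀ V₁) (hW : gradedClosure hv W = ⊤)
    (hAB : Disjoint A B) (hf : MapsParts V₀ V₁ A B f) (hWf : W ≤ LinearMap.ker f) : f = 0 :=
  LinearMap.ker_eq_top.1 <| top_le_iff.1 <|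
    hW ▸ gradedClosure_le hv (isGradedSubmodule_ker hv hAB hf) hWf

lemma comp_eq_comp_of_odd_of_eq_self (hv : IsCompl V₀ V₁) (hW : gradedClosure hv W = ⊤)
    {J T : V →ₗ[k] V} (hJ : MapsParts V₀ V₁ V₁ V₀ J) (hJW : ∀ w ∈ W, J w = w)
    (hT : MapsParts V₀ V₁ V₀ V₁ T ∨ MapsParts V₀ V₁ V₁ V₀ T) (hTW : ∀ w ∈ W, T w ∈ W) :
    J ∘ₗ T = T ∘ₗ J := by
  rw [← sub_eq_zero]
  have hWker : W ≤ LinearMap.ker (J ∘ₗ T - T ∘ₗ J) := fun w hw => by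
    simp [hJW _ (hTW w hw), hJW w hw]
  rcases hT with hT | hT
  · exact eq_zero_of_mapsParts_of_le_ker hv hW hv.disjoint.symm
      ((hJ.comp hT).sub (hT.symm.comp hJ)) hWker
  · exact eq_zero_of_mapsParts_of_le_ker hv hW hv.disjoint
      ((hJ.symm.comp hT).sub (hT.symm.comp hJ)) hWker

end GradedSubmodule

section GradedComodule

variable {N V : Type} [AddCommGroup N] [Module k N] [AddCommGroup V] [Module k V]
  {N₀ N₁ : Submodule k N} {β : V →ₗ[k] V ⊗[k] N} {V₀ V₁ W : Submodule k V}

lemma rightSlice_mem_of_mem_sup {φ : Module.Dual k N} (hφ : N₁ ≤ LinearMap.ker φ)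
    {A B : Submodule k V} {t : V ⊗[k] N}
    (ht : t ∈ LinearMap.range (TensorProduct.mapIncl A N₀) ⊔
      LinearMap.range (TensorProduct.mapIncl B N₁)) :
    rightSlice φ t ∈ A := by
  obtain ⟨_, ⟨x, rfl⟩, _, ⟨y, rfl⟩, rfl⟩ := Submodule.mem_sup.1 ht
  have hφ₁ : φ ∘ₗ N₁.subtype = 0 := LinearMap.ext fun n => hφ n.2
  rw [map_add, TensorProduct.mapIncl, TensorProduct.mapIncl, rightSlice_map, rightSlice_map, hφ₁,
    rightSlice_zero, LinearMap.zero_apply, map_zero, add_zero]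
  exact (rightSlice _ x).2

lemma IsGradedComodule.mapsParts_dualAction_even (hgr : IsGradedComodule N₀ N₁ β V₀ V₁)
    {φ : Module.Dual k N} (hφ : N₁ ≤ LinearMap.ker φ) :
    MapsParts V₀ V₁ V₀ V₁ (dualAction β φ) :=
  mapsParts_iff.2 ⟨fun v hv => rightSlice_mem_of_mem_sup hφ (hgr.even v hv),
    fun v hv => rightSlice_mem_of_mem_sup hφ (by rw [sup_comm]; exact hgr.odd v hv)⟩

lemma IsGradedComodule.mapsParts_dualAction_odd (hgr : IsGradedComodule N₀ N₁ β V₀ V₁)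
    {φ : Module.Dual k N} (hφ : N₀ ≤ LinearMap.ker φ) :
    MapsParts V₀ V₁ V₁ V₀ (dualAction β φ) :=
  mapsParts_iff.2
    ⟨fun v hv => rightSlice_mem_of_mem_sup hφ (by rw [sup_comm]; exact hgr.even v hv),
    fun v hv => rightSlice_mem_of_mem_sup hφ (hgr.odd v hv)⟩

lemma IsGradedComodule.exists_dualAction_eq_add (hN : IsCompl N₀ N₁)
    (hgr : IsGradedComodule N₀ N₁ β V₀ V₁) (φ : Module.Dual k N) :
    ∃ φ₀ φ₁ : Module.Dual k N, MapsParts V₀ V₁ V₀ V₁ (dualAction β φ₀) ∧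
      MapsParts V₀ V₁ V₁ V₀ (dualAction β φ₁) ∧
      dualAction β φ = dualAction β φ₀ + dualAction β φ₁ := by
  refine ⟨φ ∘ₗ N₀.projection N₁ hN, φ ∘ₗ N₁.projection N₀ hN.symm,
    hgr.mapsParts_dualAction_even fun n hn => ?_, hgr.mapsParts_dualAction_odd fun n hn => ?_, ?_⟩
  · simp [Submodule.projection_apply_of_mem_right hN hn]
  · simp [Submodule.projection_apply_of_mem_right hN.symm hn]
  · rw [← dualAction_add, ← LinearMap.comp_add, Submodule.projection_add_projection_eq_id,
      LinearMap.comp_id]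

lemma IsGradedComodule.isSubcomodule_inf_sup_inf (hN : IsCompl N₀ N₁)
    (hgr : IsGradedComodule N₀ N₁ β V₀ V₁) (hW : IsSubcomodule β W) :
    IsSubcomodule β (W ⊓ V₀ ⊔ W ⊓ V₁) := by
  rw [isSubcomodule_iff_dualAction] at hW ⊢
  intro φ u hu
  obtain ⟨φ₀, φ₁, h₀, h₁, hφ⟩ := hgr.exists_dualAction_eq_add hN φ
  rw [mapsParts_iff] at h₀ h₁
  obtain ⟨a, ha, b, hb, rfl⟩ := Submodule.mem_sup.1 hu
  rw [hφ, LinearMap.add_apply, map_add, map_add]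
  exact add_mem
    (add_mem (Submodule.mem_sup_left ⟨hW _ _ ha.1, h₀.1 _ ha.2⟩)
      (Submodule.mem_sup_right ⟨hW _ _ hb.1, h₀.2 _ hb.2⟩))
    (add_mem (Submodule.mem_sup_right ⟨hW _ _ ha.1, h₁.1 _ ha.2⟩)
      (Submodule.mem_sup_left ⟨hW _ _ hb.1, h₁.2 _ hb.2⟩))

lemma IsGradedComodule.isSubcomodule_gradedClosure (hN : IsCompl N₀ N₁)
    (hgr : IsGradedComodule N₀ N₁ β V₀ V₁) (hW : IsSubcomodule β W) :
    IsSubcomodule β (gradedClosure hgr.compl W) := by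
  have hv := hgr.compl
  rw [isSubcomodule_iff_dualAction] at hW ⊢
  intro φ u hu
  obtain ⟨φ₀, φ₁, h₀, h₁, hφ⟩ := hgr.exists_dualAction_eq_add hN φ
  obtain ⟨_, ⟨a, ha, rfl⟩, _, ⟨b, hb, rfl⟩, rfl⟩ := Submodule.mem_sup.1 hu
  rw [hφ, LinearMap.add_apply, map_add, map_add, ← h₀.projection_apply hv hv,
    ← h₀.symm.projection_apply hv.symm hv.symm, ← h₁.projection_apply hv hv.symm,
    ← h₁.symm.projection_apply hv.symm hv]
  exact add_mem (add_mem (Submodule.mem_sup_left ⟨_, hW _ _ ha, rfl⟩)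
      (Submodule.mem_sup_right ⟨_, hW _ _ hb, rfl⟩))
    (add_mem (Submodule.mem_sup_right ⟨_, hW _ _ ha, rfl⟩)
      (Submodule.mem_sup_left ⟨_, hW _ _ hb, rfl⟩))

lemma IsGradedComodule.isComodHom_of_odd_of_eq_self (hN : IsCompl N₀ N₁)
    (hgr : IsGradedComodule N₀ N₁ β V₀ V₁) (hW : IsSubcomodule β W)
    (hWtop : gradedClosure hgr.compl W = ⊤) {J : V →ₗ[k] V} (hJ : MapsParts V₀ V₁ V₁ V₀ J)
    (hJW : ∀ w ∈ W, J w = w) : IsComodHom β β J := by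
  rw [isSubcomodule_iff_dualAction] at hW
  refine isComodHom_iff_dualAction.2 fun φ => ?_
  obtain ⟨φ₀, φ₁, h₀, h₁, hφ⟩ := hgr.exists_dualAction_eq_add hN φ
  rw [hφ, LinearMap.comp_add, LinearMap.add_comp,
    comp_eq_comp_of_odd_of_eq_self hgr.compl hWtop hJ hJW (.inl h₀) (hW φ₀),
    comp_eq_comp_of_odd_of_eq_self hgr.compl hWtop hJ hJW (.inr h₁) (hW φ₁)]

end GradedComodule

lemma exists_ker_sub_smul_id_ne_bot {K V : Type*} [Field K] [IsAlgClosed K] [AddCommGroup V]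
    [Module K V] [FiniteDimensional K V] [Nontrivial V] (f : Module.End K V) :
    ∃ c : K, LinearMap.ker (f - c • LinearMap.id) ≠ ⊥ := by
  obtain ⟨c, hc⟩ := Module.End.exists_eigenvalue f
  rw [Module.End.hasEigenvalue_iff, Module.End.eigenspace_def, Module.End.one_eq_id] at hc
  exact ⟨c, hc⟩

section GradedSimple

variable {N V : Type} [AddCommGroup N] [Module k N] [AddCommGroup V] [Module k V]
  {N₀ N₁ : Submodule k N} {β : V →ₗ[k] V ⊗[k] N} {V₀ V₁ U W A B : Submodule k V}
  {f : V →ₗ[k] V}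

lemma exists_subcomodule_ne_bot_ne_top_of_odd [IsAlgClosed k] [FiniteDimensional k V]
    [Nontrivial V] (hv : IsCompl V₀ V₁) (hf : IsComodHom β β f)
    (hodd : MapsParts V₀ V₁ V₁ V₀ f) (hf0 : f ≠ 0) :
    ∃ W : Submodule k V, IsSubcomodule β W ∧ W ≠ ⊥ ∧ W ≠ ⊤ := by
  obtain ⟨r, hr⟩ := exists_ker_sub_smul_id_ne_bot f
  refine ⟨_, isSubcomodule_ker (hf.sub ((isComodHom_id β).smul r)), hr, fun htop => hf0 ?_⟩
  have hfr : f = r • LinearMap.id := sub_eq_zero.1 (LinearMap.ker_eq_top.1 htop)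
  exact eq_zero_of_even_of_odd hv (hfr ▸ mapsParts_id.smul r) hodd

namespace IsGradedSimpleSub

lemma nontrivial (h : IsGradedSimpleSub β V₀ V₁ ⊤) : Nontrivial V :=
  let ⟨v, _, hv⟩ := (Submodule.ne_bot_iff _).1 h.2.2.1
  nontrivial_of_ne v 0 hv

lemma eq_bot_or_eq_top (h : IsGradedSimpleSub β V₀ V₁ ⊤) (hU : IsSubcomodule β U)
    (hUgr : IsGradedSubmodule V₀ V₁ U) : U = ⊥ ∨ U = ⊤ :=
  h.2.2.2 U le_top hU hUgr

lemma ker_eq_bot_or_eq_zero (h : IsGradedSimpleSub β V₀ V₁ ⊤) (hv : IsCompl V₀ V₁)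
    (hf : IsComodHom β β f) (hAB : Disjoint A B) (hfAB : MapsParts V₀ V₁ A B f) :
    LinearMap.ker f = ⊥ ∨ f = 0 :=
  (h.eq_bot_or_eq_top (isSubcomodule_ker hf) (isGradedSubmodule_ker hv hAB hfAB)).imp_right
    LinearMap.ker_eq_top.1

lemma finiteDimensional {C₀ C₁ : Submodule k C} {β : V →ₗ[k] V ⊗[k] C}
    (h : IsGradedSimpleSub β V₀ V₁ ⊤) (hC : IsCompl C₀ C₁) (hβ : IsComodule k C β)
    (hgr : IsGradedComodule C₀ C₁ β V₀ V₁) : FiniteDimensional k V := by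
  obtain ⟨v, -, hv0⟩ := (Submodule.ne_bot_iff _).1 h.2.2.1
  obtain ⟨U, hU, hUβ, hvU⟩ := hβ.exists_finiteDimensional_subcomodule v
  have htop : gradedClosure hgr.compl U = ⊤ :=
    (h.eq_bot_or_eq_top (hgr.isSubcomodule_gradedClosure hC hUβ)
      (isGradedSubmodule_gradedClosure _)).resolve_left fun hbot =>
        hv0 ((Submodule.mem_bot k).1 (hbot ▸ le_gradedClosure hgr.compl hvU))
  have : FiniteDimensional k (gradedClosure hgr.compl U) := by
    unfold gradedClosure; infer_instance
  rw [htop] at this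
  exact Module.Finite.equiv Submodule.topEquiv

lemma eq_smul_id_of_even [IsAlgClosed k] [FiniteDimensional k V]
    (h : IsGradedSimpleSub β V₀ V₁ ⊤) (hv : IsCompl V₀ V₁) (hf : IsComodHom β β f)
    (heven : MapsParts V₀ V₁ V₀ V₁ f) : ∃ c : k, f = c • LinearMap.id := by
  have := h.nontrivial
  obtain ⟨c, hc⟩ := exists_ker_sub_smul_id_ne_bot f
  exact ⟨c, sub_eq_zero.1 <| (h.ker_eq_bot_or_eq_zero hv (hf.sub ((isComodHom_id β).smul c))
    hv.disjoint (heven.sub (mapsParts_id.smul c))).resolve_left hc⟩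

lemma exists_odd_comp_self_eq_neg_id [IsAlgClosed k] [FiniteDimensional k V]
    (h : IsGradedSimpleSub β V₀ V₁ ⊤) (hv : IsCompl V₀ V₁) (hf : IsComodHom β β f)
    (hodd : MapsParts V₀ V₁ V₁ V₀ f) (hf0 : f ≠ 0) :
    ∃ J : V →ₗ[k] V, IsComodHom β β J ∧ MapsParts V₀ V₁ V₁ V₀ J ∧ J ∘ₗ J = -LinearMap.id := by
  obtain ⟨c, hc⟩ := h.eq_smul_id_of_even hv (hf.comp hf) (hodd.symm.comp hodd)
  have hker : LinearMap.ker f = ⊥ :=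
    (h.ker_eq_bot_or_eq_zero hv hf hv.disjoint.symm hodd).resolve_right hf0
  have hc0 : c ≠ 0 := by
    rintro rfl
    refine hf0 (LinearMap.ext fun v => ?_)
    have hfv : f v ∈ LinearMap.ker f := by simpa using LinearMap.congr_fun hc v
    simpa [hker] using hfv
  obtain ⟨d, hd⟩ := IsAlgClosed.exists_pow_nat_eq (-c⁻¹) two_pos
  refine ⟨d • f, hf.smul d, hodd.smul d, ?_⟩
  rw [LinearMap.smul_comp, LinearMap.comp_smul, hc, smul_smul, smul_smul, ← sq, hd, neg_mul,
    inv_mul_cancel₀ hc0, neg_one_smul]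

lemma eq_smul_of_odd [IsAlgClosed k] [FiniteDimensional k V]
    (h : IsGradedSimpleSub β V₀ V₁ ⊤) (hv : IsCompl V₀ V₁) {J : V →ₗ[k] V}
    (hJ : IsComodHom β β J) (hJodd : MapsParts V₀ V₁ V₁ V₀ J) (hJJ : J ∘ₗ J = -LinearMap.id)
    (hf : IsComodHom β β f) (hodd : MapsParts V₀ V₁ V₁ V₀ f) : ∃ c : k, f = c • J := by
  obtain ⟨a, ha⟩ := h.eq_smul_id_of_even hv (hJ.comp hf) (hJodd.symm.comp hodd)
  refine ⟨-a, ?_⟩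
  calc f = -(J ∘ₗ (J ∘ₗ f)) := by
        rw [← LinearMap.comp_assoc, hJJ, LinearMap.neg_comp, LinearMap.id_comp, neg_neg]
    _ = -a • J := by rw [ha, LinearMap.comp_smul, LinearMap.comp_id, neg_smul]

lemma exists_odd_of_ne_bot_of_ne_top (h : IsGradedSimpleSub β V₀ V₁ ⊤) (hN : IsCompl N₀ N₁)
    (hgr : IsGradedComodule N₀ N₁ β V₀ V₁) (hW : IsSubcomodule β W) (hbot : W ≠ ⊥)
    (htop : W ≠ ⊤) :
    ∃ J : V →ₗ[k] V, IsComodHom β β J ∧ MapsParts V₀ V₁ V₁ V₀ J ∧ J ≠ 0 := by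
  have hv := hgr.compl
  have hpart : W ⊓ V₀ ⊔ W ⊓ V₁ = ⊥ :=
    (h.eq_bot_or_eq_top (hgr.isSubcomodule_inf_sup_inf hN hW)
      (isGradedSubmodule_sup inf_le_right inf_le_right)).resolve_right fun hpart =>
        htop (top_le_iff.1 (hpart ▸ sup_le inf_le_left inf_le_left))
  have hclosure : gradedClosure hv W = ⊤ :=
    (h.eq_bot_or_eq_top (hgr.isSubcomodule_gradedClosure hN hW)
      (isGradedSubmodule_gradedClosure hv)).resolve_left fun hclosure =>
        hbot (le_bot_iff.1 (hclosure ▸ le_gradedClosure hv))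
  obtain ⟨J, hJ, hJW⟩ := exists_odd_eq_self_of_isCompl hv
    ⟨disjoint_iff.2 (sup_eq_bot_iff.1 hpart).1,
      codisjoint_iff.2 (top_le_iff.1 (hclosure ▸ gradedClosure_le_sup_left hv))⟩
    ⟨disjoint_iff.2 (sup_eq_bot_iff.1 hpart).2,
      codisjoint_iff.2 (top_le_iff.1 (hclosure ▸ gradedClosure_le_sup_right hv))⟩
  refine ⟨J, hgr.isComodHom_of_odd_of_eq_self hN hW hclosure hJ hJW, hJ, fun hJ0 => hbot ?_⟩
  exact (Submodule.eq_bot_iff W).2 fun w hw => by rw [← hJW w hw, hJ0, LinearMap.zero_apply]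

end IsGradedSimpleSub

end GradedSimple

/-- Schur's lemma for graded simple comodules over a `Z₂`-graded coalgebra over an
algebraically closed field: the commutant of a graded simple comodule `V` is one- or
two-dimensional.  Its even part consists of the scalar multiples of the identity; its
odd part is either zero or spanned by an odd endomorphism `J` with `J² = -id`; and the
odd part is nonzero if and only if `V` is reducible as a comodule in the nongraded
sense. -/
theorem graded_schur_commutant [IsAlgClosed k]
    (C₀ C₁ : Submodule k C) (hC : IsGradedCoalgebra C₀ C₁)
    {V : Type} [AddCommGroup V] [Module k V]
    (β : V →ₗ[k] V ⊗[k] C) (hβ : IsComodule k C β)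
    (V₀ V₁ : Submodule k V) (hgr : IsGradedComodule C₀ C₁ β V₀ V₁)
    (hsimple : IsGradedSimpleSub β V₀ V₁ (⊤ : Submodule k V)) :
    (∀ f : V →ₗ[k] V, IsComodHom β β f →
        Submodule.map f V₀ ≤ V₀ → Submodule.map f V₁ ≤ V₁ →
        ∃ c : k, f = c • LinearMap.id) ∧
    ((∀ f : V →ₗ[k] V, IsComodHom β β f →
        Submodule.map f V₀ ≤ V₁ → Submodule.map f V₁ ≤ V₀ → f = 0) ∨
      (∃ J : V →ₗ[k] V, IsComodHom β β J ∧
        Submodule.map J V₀ ≤ V₁ ∧ Submodule.map J V₁ ≤ V₀ ∧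
        J ∘ₗ J = -LinearMap.id ∧
        ∀ f : V →ₗ[k] V, IsComodHom β β f →
          Submodule.map f V₀ ≤ V₁ → Submodule.map f V₁ ≤ V₀ →
            ∃ c : k, f = c • J)) ∧
    ((∃ f : V →ₗ[k] V, IsComodHom β β f ∧
        Submodule.map f V₀ ≤ V₁ ∧ Submodule.map f V₁ ≤ V₀ ∧ f ≠ 0) ↔
      (∃ W : Submodule k V, IsSubcomodule β W ∧ W ≠ ⊥ ∧ W ≠ ⊤)) := by
  have hv := hgr.compl
  have := hsimple.nontrivial
  have := hsimple.finiteDimensional hC.compl hβ hgr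
  refine ⟨fun f hf h₀ h₁ => hsimple.eq_smul_id_of_even hv hf ⟨h₀, h₁⟩, ?_, ?_, ?_⟩
  · by_cases hodd : ∀ f : V →ₗ[k] V, IsComodHom β β f →
        Submodule.map f V₀ ≤ V₁ → Submodule.map f V₁ ≤ V₀ → f = 0
    · exact .inl hodd
    push Not at hodd
    obtain ⟨f, hf, h₀, h₁, hf0⟩ := hodd
    obtain ⟨J, hJ, hJodd, hJJ⟩ := hsimple.exists_odd_comp_self_eq_neg_id hv hf ⟨h₀, h₁⟩ hf0
    exact .inr ⟨J, hJ, hJodd.1, hJodd.2, hJJ,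
      fun g hg h₀ h₁ => hsimple.eq_smul_of_odd hv hJ hJodd hJJ hg ⟨h₀, h₁⟩⟩
  · rintro ⟨f, hf, h₀, h₁, hf0⟩
    exact exists_subcomodule_ne_bot_ne_top_of_odd hv hf ⟨h₀, h₁⟩ hf0
  · rintro ⟨W, hW, hbot, htop⟩
    obtain ⟨J, hJ, hJodd, hJ0⟩ := hsimple.exists_odd_of_ne_bot_of_ne_top hC.compl hgr hW hbot htop
    exact ⟨J, hJ, hJodd.1, hJodd.2, hJ0⟩

end SuperCoalg
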